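/- (Integral estimates of the speed.) (1) If α > 3, then ∫_{t₀}^{+∞} t·‖ẋ(t)‖² dt < +∞. (2) If α ≤ 3, then ∫_{t₀}^{+∞} t^p·‖ẋ(t)‖² dt < +∞ for every real p with p < α − 2; in particular, for α = 3, ∫_{t₀}^{+∞} t^{1−ε}·‖ẋ(t)‖² dt < +∞ for all ε > 0. -/

import Mathlib

/-!
For `-1 ≤ p ≤ 1` consider the energy
`E_p(t) = t^(p+1) (‖ẋ‖²/2 + Φ(x) - Φ(x*)) + (p+1) t^p ⟪x - x*, ẋ⟫ + (p+1)(α-p)/2 t^(p-1) ‖x - x*‖²`.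
Completing the square, `E_p = t^(p+1) (Φ(x) - Φ(x*)) + t^(p-1)/2 ‖t ẋ + (p+1)(x - x*)‖²
+ (p+1)(α-2p-1)/2 t^(p-1) ‖x - x*‖²`, so `E_p ≥ 0` when `2p + 1 ≤ α`. Along the trajectory,
the equation, the convexity inequality `Φ(x) - Φ(x*) ≤ ⟪∇Φ(x), x - x*⟫` and `p ≤ 1` give
`Ė_p ≤ -(α - 3(p+1)/2) t^p ‖ẋ‖²`, hence `∫ t^p ‖ẋ‖² ≤ E_p(t₀) / (α - 3(p+1)/2)` whenever
`3(p+1) < 2α`. For `α > 3` take `p = 1`; for `α ≤ 3` take `p` itself, or `p = -1` if `p < -1`,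
and lower the exponent at the end.
-/

open MeasureTheory Set
open scoped RealInnerProductSpace

theorem ConvexOn.sub_le_fderiv_apply_sub {E : Type*} [NormedAddCommGroup E] [NormedSpace ℝ E]
    {f : E → ℝ} (hf : ConvexOn ℝ univ f) {y : E} (hd : DifferentiableAt ℝ f y) (z : E) :
    f y - f z ≤ fderiv ℝ f y (y - z) := by
  have hline : ConvexOn ℝ univ (fun s : ℝ => f (z + s • (y - z))) := by
    simpa [Function.comp_def, AffineMap.lineMap_apply, add_comm] using
      hf.comp_affineMap (AffineMap.lineMap z y : ℝ →ᵃ[ℝ] E)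
  have hderiv : HasDerivAt (fun s : ℝ => f (z + s • (y - z))) (fderiv ℝ f y (y - z)) 1 := by
    have hpath : HasDerivAt (fun s : ℝ => z + s • (y - z)) (y - z) 1 := by
      simpa using ((hasDerivAt_id (1 : ℝ)).smul_const (y - z)).const_add z
    have hf' : HasFDerivAt f (fderiv ℝ f y) (z + (1 : ℝ) • (y - z)) := by
      simpa using hd.hasFDerivAt
    exact hf'.comp_hasDerivAt 1 hpath
  simpa [slope_def_field] using
    hline.slope_le_of_hasDerivAt (mem_univ 0) (mem_univ 1) one_pos hderiv

theorem integrableOn_Ioi_of_hasDerivAt_le_neg_mul {f V V' : ℝ → ℝ} {a c : ℝ} (hc : 0 < c)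
    (hf : ContinuousOn f (Ici a)) (hf₀ : ∀ t ∈ Ici a, 0 ≤ f t)
    (hV : ∀ t ∈ Ici a, HasDerivAt V (V' t) t) (hV₀ : ∀ t ∈ Ici a, 0 ≤ V t)
    (hV' : ∀ t ∈ Ici a, c * f t ≤ -V' t) :
    IntegrableOn f (Ioi a) := by
  have hfi : ∀ b, IntegrableOn f (Icc a b) := fun b =>
    (hf.mono Icc_subset_Ici_self).integrableOn_Icc
  refine integrableOn_Ioi_of_intervalIntegral_norm_bounded (V a / c) a
    (fun b => (hfi b).mono_set Ioc_subset_Icc_self) Filter.tendsto_id ?_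
  filter_upwards [Filter.eventually_ge_atTop a] with b hab
  have hsub : Icc a b ⊆ Ici a := Icc_subset_Ici_self
  have hdecay : ∫ t in a..b, c * f t ≤ (-V) b - (-V) a :=
    intervalIntegral.integral_le_sub_of_hasDeriv_right_of_le hab
      (fun t ht => (hV t (hsub ht)).neg.continuousAt.continuousWithinAt)
      (fun t ht => (hV t (hsub (Ioo_subset_Icc_self ht))).neg.hasDerivWithinAt)
      ((hfi b).const_mul c) (fun t ht => hV' t (hsub (Ioo_subset_Icc_self ht)))
  have hnorm : ∫ t in a..b, ‖f t‖ = ∫ t in a..b, f t :=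
    intervalIntegral.integral_congr fun t ht =>
      Real.norm_of_nonneg (hf₀ t (hsub (by rwa [uIcc_of_le hab] at ht)))
  rw [hnorm, le_div_iff₀' hc, ← intervalIntegral.integral_const_mul]
  simp only [Pi.neg_apply] at hdecay
  linarith [hV₀ b (hsub (right_mem_Icc.mpr hab))]

theorem integrableOn_Ioi_rpow_mul_of_le {g : ℝ → ℝ} {a p q : ℝ} (ha : 0 < a) (hpq : p ≤ q)
    (h : IntegrableOn (fun t => t ^ q * g t) (Ioi a)) :
    IntegrableOn (fun t => t ^ p * g t) (Ioi a) := by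
  have hbdd : ∀ᵐ t ∂volume.restrict (Ioi a), ‖t ^ (p - q)‖ ≤ a ^ (p - q) := by
    filter_upwards [ae_restrict_mem measurableSet_Ioi] with t ht
    rw [Real.norm_of_nonneg (Real.rpow_nonneg (ha.trans ht).le _)]
    exact Real.rpow_le_rpow_of_nonpos ha (le_of_lt ht) (by linarith)
  refine IntegrableOn.congr_fun (h.bdd_mul (by fun_prop) hbdd) (fun t ht => ?_)
    measurableSet_Ioi
  rw [← mul_assoc, ← Real.rpow_add (ha.trans ht), sub_add_cancel]

section Energy

variable {H : Type*} [NormedAddCommGroup H] [InnerProductSpace ℝ H]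
  (Φ : H → ℝ) (x : ℝ → H) (xstar : H) (α p : ℝ)

noncomputable def avdEnergy (t : ℝ) : ℝ :=
  t ^ (p + 1) * (‖deriv x t‖ ^ 2 / 2 + (Φ (x t) - Φ xstar))
    + (p + 1) * t ^ p * ⟪x t - xstar, deriv x t⟫
    + (p + 1) * (α - p) / 2 * t ^ (p - 1) * ‖x t - xstar‖ ^ 2

theorem hasDerivAt_avdEnergy [CompleteSpace H] {t : ℝ} (ht : 0 < t)
    (hΦ : DifferentiableAt ℝ Φ (x t)) (hx : DifferentiableAt ℝ x t)
    (hv : DifferentiableAt ℝ (deriv x) t)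
    (hode : deriv (deriv x) t + (α / t) • deriv x t + gradient Φ (x t) = 0) :
    HasDerivAt (avdEnergy Φ x xstar α p)
      ((p + 1) * t ^ p * (Φ (x t) - Φ xstar - ⟪gradient Φ (x t), x t - xstar⟫)
        + (3 * (p + 1) / 2 - α) * t ^ p * ‖deriv x t‖ ^ 2
        + (p + 1) * (α - p) * (p - 1) / 2 * t ^ (p - 2) * ‖x t - xstar‖ ^ 2) t := by
  have hrpow (q : ℝ) : HasDerivAt (fun s : ℝ => s ^ q) (q * t ^ (q - 1)) t :=
    Real.hasDerivAt_rpow_const (Or.inl ht.ne')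
  have hΦx : HasDerivAt (fun s => Φ (x s)) ⟪gradient Φ (x t), deriv x t⟫ t := by
    rw [inner_gradient_left]
    exact hΦ.hasFDerivAt.comp_hasDerivAt t hx.hasDerivAt
  have hu := hx.hasDerivAt.sub_const xstar
  have hv := hv.hasDerivAt
  refine HasDerivAt.congr_deriv (f := avdEnergy Φ x xstar α p)
    ((((hrpow (p + 1)).mul ((hv.norm_sq.div_const 2).add (hΦx.sub_const (Φ xstar)))).add
      (((hrpow p).const_mul (p + 1)).mul (hu.inner ℝ hv))).add
      (((hrpow (p - 1)).const_mul ((p + 1) * (α - p) / 2)).mul hu.norm_sq)) ?_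
  have hacc : deriv (deriv x) t = -((α / t) • deriv x t + gradient Φ (x t)) := by
    rw [add_assoc] at hode
    exact eq_neg_of_add_eq_zero_left hode
  rw [hacc]
  simp only [inner_neg_right, inner_add_right, real_inner_smul_right, real_inner_self_eq_norm_sq,
    Pi.add_apply, real_inner_comm (deriv x t), real_inner_comm (x t - xstar) (gradient Φ (x t))]
  have hpow (q : ℝ) (n : ℕ) (hq : q = p - 2 + n) : t ^ q = t ^ (p - 2) * t ^ n := by
    rw [hq, Real.rpow_add_natCast ht.ne']
  rw [hpow (p + 1) 3 (by push_cast; ring), hpow (p + 1 - 1) 2 (by push_cast; ring),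
    hpow p 2 (by push_cast; ring), hpow (p - 1) 1 (by push_cast; ring),
    show p - 1 - 1 = p - 2 by ring]
  field_simp
  ring

theorem avdEnergy_nonneg {t : ℝ} (ht : 0 < t) (hxstar : ∀ y, Φ xstar ≤ Φ y) (hp : -1 ≤ p)
    (hpα : 2 * p + 1 ≤ α) : 0 ≤ avdEnergy Φ x xstar α p t := by
  set u := x t - xstar
  set v := deriv x t
  have hsplit : avdEnergy Φ x xstar α p t = t ^ (p + 1) * (Φ (x t) - Φ xstar)
      + t ^ (p - 1) * (‖t • v + (p + 1) • u‖ ^ 2 / 2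
        + (p + 1) * (α - 2 * p - 1) / 2 * ‖u‖ ^ 2) := by
    have hpow (q : ℝ) (n : ℕ) (hq : q = p - 1 + n) : t ^ q = t ^ (p - 1) * t ^ n := by
      rw [hq, Real.rpow_add_natCast ht.ne']
    rw [avdEnergy, norm_add_sq_real, norm_smul, norm_smul, real_inner_smul_left,
      real_inner_smul_right, Real.norm_of_nonneg ht.le,
      Real.norm_of_nonneg (by linarith : 0 ≤ p + 1), hpow (p + 1) 2 (by push_cast; ring),
      hpow p 1 (by push_cast; ring), real_inner_comm v u]
    ring
  have hE₁ : 0 ≤ t ^ (p + 1) * (Φ (x t) - Φ xstar) :=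
    mul_nonneg (by positivity) (sub_nonneg.mpr (hxstar _))
  have hE₂ : 0 ≤ (p + 1) * (α - 2 * p - 1) / 2 * ‖u‖ ^ 2 :=
    mul_nonneg (div_nonneg (mul_nonneg (by linarith) (by linarith)) zero_le_two) (sq_nonneg _)
  rw [hsplit]
  exact add_nonneg hE₁ (mul_nonneg (by positivity) (add_nonneg (by positivity) hE₂))

theorem integrableOn_rpow_mul_norm_deriv_sq [CompleteSpace H] (hΦconv : ConvexOn ℝ univ Φ)
    (hΦ : Differentiable ℝ Φ) (hxstar : ∀ y, Φ xstar ≤ Φ y) {t₀ : ℝ} (ht₀ : 0 < t₀)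
    (hx : ContDiff ℝ 2 x)
    (hode : ∀ t, t₀ ≤ t → deriv (deriv x) t + (α / t) • deriv x t + gradient Φ (x t) = 0)
    (hp : -1 ≤ p) (hp₁ : p ≤ 1) (hpα : 2 * p + 1 ≤ α) (hpα' : 3 * (p + 1) < 2 * α) :
    IntegrableOn (fun t => t ^ p * ‖deriv x t‖ ^ 2) (Ioi t₀) := by
  have hv : ContDiff ℝ 1 (deriv x) := hx.deriv' (n := 1)
  refine integrableOn_Ioi_of_hasDerivAt_le_neg_mul (c := α - 3 * (p + 1) / 2)
    (V := avdEnergy Φ x xstar α p) (by linarith) (fun t ht => ?_) (fun t ht => ?_)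
    (fun t ht => hasDerivAt_avdEnergy Φ x xstar α p (ht₀.trans_le ht) (hΦ _)
      (hx.differentiable two_ne_zero t) (hv.differentiable one_ne_zero t) (hode t ht))
    (fun t ht => avdEnergy_nonneg Φ x xstar α p (ht₀.trans_le ht) hxstar hp hpα)
    (fun t ht => ?_)
  · exact ((Real.continuousAt_rpow_const t p (Or.inl (ht₀.trans_le ht).ne')).mul
      (hv.continuous.norm.pow 2).continuousAt).continuousWithinAt
  · exact mul_nonneg (Real.rpow_nonneg (ht₀.trans_le ht).le p) (sq_nonneg _)
  · have htpos : 0 < t := ht₀.trans_le ht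
    have hconv : Φ (x t) - Φ xstar - ⟪gradient Φ (x t), x t - xstar⟫ ≤ 0 := by
      rw [inner_gradient_left]
      linarith [hΦconv.sub_le_fderiv_apply_sub (hΦ (x t)) xstar]
    have hgap : 0 ≤ (p + 1) * t ^ p * -(Φ (x t) - Φ xstar - ⟪gradient Φ (x t), x t - xstar⟫) :=
      mul_nonneg (mul_nonneg (by linarith) (by positivity)) (by linarith)
    have hdist : 0 ≤ (p + 1) * (α - p) * (1 - p) / 2 * t ^ (p - 2) * ‖x t - xstar‖ ^ 2 :=
      mul_nonneg (mul_nonneg (div_nonneg (mul_nonneg (mul_nonneg (by linarith) (by linarith))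
        (by linarith)) zero_le_two) (by positivity)) (sq_nonneg _)
    linarith

end Energy

/-- integral estimates of the speed along trajectories of `(AVD)_α`:
if `α > 3` then `∫_{t₀}^∞ t ‖ẋ(t)‖² dt < ∞`; if `α ≤ 3` then
`∫_{t₀}^∞ t^p ‖ẋ(t)‖² dt < ∞` for every `p < α - 2`. -/
theorem stmt_3
    {H : Type*} [NormedAddCommGroup H] [InnerProductSpace ℝ H] [CompleteSpace H]
    (Φ : H → ℝ) (hΦconv : ConvexOn ℝ Set.univ Φ) (hΦC1 : ContDiff ℝ 1 Φ)
    (xstar : H) (hxstar : ∀ y : H, Φ xstar ≤ Φ y)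
    (α t₀ : ℝ) (hα0 : 0 < α) (ht₀ : 0 < t₀)
    (x : ℝ → H) (hx : ContDiff ℝ 2 x)
    (hode : ∀ t : ℝ, t₀ ≤ t →
      deriv (deriv x) t + (α / t) • deriv x t + gradient Φ (x t) = 0) :
    (3 < α → MeasureTheory.IntegrableOn
        (fun t : ℝ => t * ‖deriv x t‖ ^ 2) (Set.Ioi t₀)) ∧
    (α ≤ 3 → ∀ p : ℝ, p < α - 2 → MeasureTheory.IntegrableOn
        (fun t : ℝ => t ^ p * ‖deriv x t‖ ^ 2) (Set.Ioi t₀)) := by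
  have hΦ : Differentiable ℝ Φ := hΦC1.differentiable one_ne_zero
  refine ⟨fun hα => ?_, fun hα p hp => ?_⟩
  · simpa using integrableOn_rpow_mul_norm_deriv_sq Φ x xstar α 1 hΦconv hΦ hxstar ht₀ hx hode
      (by norm_num) le_rfl (by linarith) (by linarith)
  · obtain ⟨q, hpq, hq, hq₁, hqα, hqα'⟩ : ∃ q, p ≤ q ∧ -1 ≤ q ∧ q ≤ 1 ∧ 2 * q + 1 ≤ α ∧
        3 * (q + 1) < 2 * α := by
      rcases le_total p (-1) with hp₁ | hp₁
      exacts [⟨-1, hp₁, le_rfl, by norm_num, by linarith, by linarith⟩,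
        ⟨p, le_rfl, hp₁, by linarith, by linarith, by linarith⟩]
    exact integrableOn_Ioi_rpow_mul_of_le ht₀ hpq <|
      integrableOn_rpow_mul_norm_deriv_sq Φ x xstar α q hΦconv hΦ hxstar ht₀ hx hode
        hq hq₁ hqα hqα'
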